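/- arXiv:2110.03677 — 9 statements merged into one kernel-verified Lean document; each statement's English description precedes it below -/
import Mathlib

section
/- Let x, y ∈ ℝⁿ, μ ∈ ℝ. The characteristic polynomial of the Hessian of f(x,y) = (μ - xᵀy)²/2 equals (λ² - (μ - xᵀy)²)^{n-1} · (λ² - λ(‖x‖² + ‖y‖²) - (μ - xᵀy)² + 2(μ - xᵀy)xᵀy). -/
open Matrix Polynomial BigOperators

/-!
The Hessian is `c • S + w wᵀ` with `c = xᵀy - μ`, `S` the involution exchanging the two blocks
and `w = (y, x)`. Since `S² = 1`, the matrix `λ - cS` has determinant `(λ² - c²)ⁿ` and inverse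
`(λ + cS) / (λ² - c²)`, so the matrix determinant lemma gives
`det (λ - H) = (λ² - c²)ⁿ⁻¹ (λ² - c² - λ wᵀw - c wᵀSw)` for all but finitely many real `λ`,
which determines the characteristic polynomial.
-/

namespace Matrix

def blockSwap (ι R : Type*) [Zero R] [One R] [DecidableEq ι] : Matrix (ι ⊕ ι) (ι ⊕ ι) R :=
  fromBlocks 0 1 1 0

section CommRing

variable {R ι : Type*} [CommRing R] [DecidableEq ι]

theorem fromBlocks_eq_smul_blockSwap_add_vecMulVec (c : R) (x y : ι → R) :
    fromBlocks (vecMulVec y y) (c • 1 + vecMulVec y x) (c • 1 + vecMulVec x y) (vecMulVec x x) =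
      c • blockSwap ι R + vecMulVec (Sum.elim y x) (Sum.elim y x) := by
  ext (i | i) (j | j) <;> simp [blockSwap, vecMulVec_apply]

variable [Fintype ι]

theorem det_add_vecMulVec {A : Matrix ι ι R} (hA : IsUnit A.det) (u v : ι → R) :
    (A + vecMulVec u v).det = A.det * (1 + v ⬝ᵥ A⁻¹ *ᵥ u) := by
  rw [vecMulVec_eq Unit, det_add_replicateCol_mul_replicateRow hA, det_unique (1 + _),
    add_apply, one_apply_eq, Matrix.mul_assoc, ← replicateCol_mulVec,
    replicateRow_mul_replicateCol_apply]

theorem smul_one_sub_smul_mul_smul_one_add_smul {S : Matrix ι ι R} (hS : S * S = 1) (t c : R) :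
    (t • 1 - c • S) * (t • 1 + c • S) = (t ^ 2 - c ^ 2) • 1 := by
  simp only [sub_mul, mul_add, smul_mul_smul, hS, Matrix.one_mul, Matrix.mul_one, sub_smul, sq]
  rw [mul_comm c t]
  abel

theorem blockSwap_mul_self : blockSwap ι R * blockSwap ι R = 1 := by
  simp [blockSwap, fromBlocks_multiply]

theorem blockSwap_mulVec_sumElim (u v : ι → R) :
    blockSwap ι R *ᵥ Sum.elim u v = Sum.elim v u := by
  simp [blockSwap, fromBlocks_mulVec]

end CommRing

section Field

variable {K ι : Type*} [Field K] [Fintype ι] [DecidableEq ι]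

theorem inv_smul_one_sub_smul {S : Matrix ι ι K} (hS : S * S = 1) {t c : K}
    (hd : t ^ 2 ≠ c ^ 2) :
    (t • 1 - c • S)⁻¹ = (t ^ 2 - c ^ 2)⁻¹ • (t • 1 + c • S) := by
  apply inv_eq_right_inv
  rw [Matrix.mul_smul, smul_one_sub_smul_mul_smul_one_add_smul hS, smul_smul,
    inv_mul_cancel₀ (sub_ne_zero.mpr hd), one_smul]

theorem det_smul_one_sub_smul_blockSwap {t : K} (ht : t ≠ 0) (c : K) :
    (t • 1 - c • blockSwap ι K).det = (t ^ 2 - c ^ 2) ^ Fintype.card ι := by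
  have hblocks :
      t • 1 - c • blockSwap ι K = t • fromBlocks 1 (-(c / t) • 1) (-(c / t) • 1) 1 := by
    ext (i | i) (j | j) <;> simp [blockSwap, one_apply, mul_div_cancel₀ _ ht, sub_eq_add_neg]
  have one_sub_smul_one (a : K) : (1 : Matrix ι ι K) - a • 1 = (1 - a) • 1 := by
    rw [sub_smul, one_smul]
  rw [hblocks, det_smul, det_fromBlocks_one₁₁, smul_mul_smul, Matrix.mul_one, one_sub_smul_one,
    det_smul, det_one, mul_one, Fintype.card_sum, ← two_mul, pow_mul, ← mul_pow]
  congr 1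
  field_simp

theorem det_smul_one_sub_smul_blockSwap_sub_vecMulVec [Nonempty ι] {t c : K} (ht : t ≠ 0)
    (hd : t ^ 2 ≠ c ^ 2) (u v : ι → K) :
    (t • 1 - (c • blockSwap ι K + vecMulVec (Sum.elim u v) (Sum.elim u v))).det =
      (t ^ 2 - c ^ 2) ^ (Fintype.card ι - 1) *
        (t ^ 2 - c ^ 2 - t * (u ⬝ᵥ u + v ⬝ᵥ v) - 2 * c * (u ⬝ᵥ v)) := by
  set w := Sum.elim u v
  set A := t • 1 - c • blockSwap ι K
  have hA : A.det = (t ^ 2 - c ^ 2) ^ Fintype.card ι := det_smul_one_sub_smul_blockSwap ht c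
  have hAunit : IsUnit A.det := by
    rw [hA]
    exact (pow_ne_zero _ (sub_ne_zero.mpr hd)).isUnit
  have hquad :
      w ⬝ᵥ A⁻¹ *ᵥ w = (t ^ 2 - c ^ 2)⁻¹ * (t * (u ⬝ᵥ u + v ⬝ᵥ v) + 2 * c * (u ⬝ᵥ v)) := by
    rw [inv_smul_one_sub_smul blockSwap_mul_self hd, smul_mulVec, add_mulVec, smul_mulVec,
      smul_mulVec, one_mulVec, blockSwap_mulVec_sumElim]
    simp only [smul_add, dotProduct_add, dotProduct_smul, sumElim_dotProduct_sumElim, smul_eq_mul,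
      dotProduct_comm v u, w]
    ring
  obtain ⟨k, hk⟩ := Nat.exists_eq_add_one.mpr (Fintype.card_pos (α := ι))
  rw [show t • 1 - (c • blockSwap ι K + vecMulVec w w) = A + vecMulVec (-w) w by
      rw [neg_vecMulVec, sub_add_eq_sub_sub, sub_eq_add_neg],
    det_add_vecMulVec hAunit, mulVec_neg, dotProduct_neg, hquad, hA, hk, Nat.add_sub_cancel,
    pow_succ]
  field_simp [sub_ne_zero.mpr hd]
  ring

end Field

end Matrix

/-- The characteristic polynomial of the Hessian of `f(x,y) = (μ - xᵀy)²/2` equals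
`(λ² - (μ - xᵀy)²)^(n-1) · (λ² - λ(‖x‖² + ‖y‖²) - (μ - xᵀy)² + 2(μ - xᵀy)xᵀy)`. -/
theorem hessian_charpoly_general {n : ℕ} (hn : 1 ≤ n) (μ : ℝ) (x y : Fin n → ℝ) :
    (Matrix.fromBlocks
      (Matrix.vecMulVec y y)
      (((∑ i, x i * y i) - μ) • (1 : Matrix (Fin n) (Fin n) ℝ) + Matrix.vecMulVec y x)
      (((∑ i, x i * y i) - μ) • (1 : Matrix (Fin n) (Fin n) ℝ) + Matrix.vecMulVec x y)
      (Matrix.vecMulVec x x)).charpoly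
    = (X ^ 2 - C ((μ - ∑ i, x i * y i) ^ 2)) ^ (n - 1) *
        (X ^ 2 - C ((∑ i, x i ^ 2) + ∑ i, y i ^ 2) * X
          - C ((μ - ∑ i, x i * y i) ^ 2)
          + C (2 * (μ - ∑ i, x i * y i) * ∑ i, x i * y i)) := by
  have : Nonempty (Fin n) := Fin.pos_iff_nonempty.mp hn
  set c := (∑ i, x i * y i) - μ
  rw [fromBlocks_eq_smul_blockSwap_add_vecMulVec]
  apply Polynomial.eq_of_infinite_eval_eq
  refine (Set.toFinite {0, c, -c}).infinite_compl.mono fun t ht => ?_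
  simp only [Set.mem_compl_iff, Set.mem_insert_iff, Set.mem_singleton_iff, not_or] at ht
  obtain ⟨ht0, htc, htnc⟩ := ht
  have hd : t ^ 2 ≠ c ^ 2 := fun h => (sq_eq_sq_iff_eq_or_eq_neg.mp h).elim htc htnc
  rw [Set.mem_ofPred_eq, eval_charpoly, scalar_apply, ← smul_one_eq_diagonal,
    det_smul_one_sub_smul_blockSwap_sub_vecMulVec ht0 hd, Fintype.card_fin]
  simp only [eval_mul, eval_pow, eval_sub, eval_add, eval_X, eval_C, dotProduct_comm y x]
  simp only [dotProduct, c, sq]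
  ring
end

section
/- (One-step decrease) For GD on f(x,y) = (μ - xᵀy)²/2 with μ > 0, if ‖x_k‖² + ‖y_k‖² < 4/h and either x_kᵀy_k > μ or x_kᵀy_k < -hμ(‖x_k‖²+‖y_k‖²)/(4 - h(‖x_k‖²+‖y_k‖²)), then ‖x_{k+1}‖² + ‖y_{k+1}‖² < ‖x_k‖² + ‖y_k‖². -/
open BigOperators

/-- One-step decrease: if `‖x‖² + ‖y‖² < 4/h` and either `xᵀy > μ` or
`xᵀy < -hμ(‖x‖²+‖y‖²)/(4 - h(‖x‖²+‖y‖²))`, then the GD step decreases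
`‖x‖² + ‖y‖²`. -/
theorem gd_one_step_decrease {d : ℕ} (μ h : ℝ) (hμ : 0 < μ) (hh : 0 < h)
    (x y : Fin d → ℝ)
    (hu : (∑ i, x i ^ 2) + ∑ i, y i ^ 2 < 4 / h)
    (hcase : μ < ∑ i, x i * y i ∨
      (∑ i, x i * y i) <
        -(h * μ * ((∑ i, x i ^ 2) + ∑ i, y i ^ 2)) /
          (4 - h * ((∑ i, x i ^ 2) + ∑ i, y i ^ 2))) :
    (∑ i, (x i + h * (μ - ∑ j, x j * y j) * y i) ^ 2)
      + (∑ i, (y i + h * (μ - ∑ j, x j * y j) * x i) ^ 2)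
    < (∑ i, x i ^ 2) + ∑ i, y i ^ 2 := by
  set s := ∑ i, x i ^ 2 with hs
  set t := ∑ i, y i ^ 2 with ht
  set p := ∑ i, x i * y i with hp
  have hs0 : 0 ≤ s := Finset.sum_nonneg fun i _ => sq_nonneg _
  have ht0 : 0 ≤ t := Finset.sum_nonneg fun i _ => sq_nonneg _
  set r := h * (μ - p) with hr
  have e1 : (∑ i, (x i + r * y i) ^ 2) = s + 2 * r * p + r ^ 2 * t := by
    simp only [hs, ht, hp, Finset.mul_sum, ← Finset.sum_add_distrib]
    exact Finset.sum_congr rfl fun i _ => by ring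
  have e2 : (∑ i, (y i + r * x i) ^ 2) = t + 2 * r * p + r ^ 2 * s := by
    simp only [hs, ht, hp, Finset.mul_sum, ← Finset.sum_add_distrib]
    exact Finset.sum_congr rfl fun i _ => by ring
  rw [e1, e2]
  -- Cauchy-Schwarz type facts: ∑(x±y)² ≥ 0
  have cs1 : 0 ≤ s + t - 2 * p := by
    have : 0 ≤ ∑ i, (x i - y i) ^ 2 := Finset.sum_nonneg fun i _ => sq_nonneg _
    have e : (∑ i, (x i - y i) ^ 2) = s + t - 2 * p := by
      simp only [hs, ht, hp, Finset.mul_sum, ← Finset.sum_add_distrib, ← Finset.sum_sub_distrib]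
      exact Finset.sum_congr rfl fun i _ => by ring
    linarith [e ▸ this]
  have cs2 : 0 ≤ s + t + 2 * p := by
    have : 0 ≤ ∑ i, (x i + y i) ^ 2 := Finset.sum_nonneg fun i _ => sq_nonneg _
    have e : (∑ i, (x i + y i) ^ 2) = s + t + 2 * p := by
      simp only [hs, ht, hp, Finset.mul_sum, ← Finset.sum_add_distrib]
      exact Finset.sum_congr rfl fun i _ => by ring
    linarith [e ▸ this]
  have hst4 : h * (s + t) < 4 := by
    have := (lt_div_iff₀ hh).mp hu
    linarith [this]
  have key : r * (r * (s + t) + 4 * p) < 0 := by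
    rcases hcase with hP | hP
    · have hrneg : r < 0 := mul_neg_of_pos_of_neg hh (by linarith)
      have hstpos : 0 < s + t := by linarith [cs1]
      have hbr : 0 < r * (s + t) + 4 * p := by
        have : (μ - p) * 4 < (μ - p) * (h * (s + t)) := by
          apply mul_lt_mul_of_neg_left hst4 (by linarith)
        rw [hr]; nlinarith
      exact mul_neg_of_neg_of_pos hrneg hbr
    · have hD : 0 < 4 - h * (s + t) := by linarith
      have hPD : p * (4 - h * (s + t)) < -(h * μ * (s + t)) :=
        (lt_div_iff₀ hD).mp hP
      have hpneg : p < 0 := by nlinarith [mul_nonneg (mul_nonneg hh.le hμ.le) (by linarith : (0:ℝ) ≤ s + t)]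
      have hrpos : 0 < r := mul_pos hh (by linarith)
      have hbr : r * (s + t) + 4 * p < 0 := by rw [hr]; nlinarith
      exact mul_neg_of_pos_of_neg hrpos hbr
  nlinarith [key]
end

section
/- For GD on f(x,y) = (μ - xᵀy)²/2, if ‖x_k‖² + ‖y_k‖² ≤ 2/h and |x_kᵀy_k| > μ > 0, then ‖x_{k+1}‖² + ‖y_{k+1}‖² < ‖x_k‖² + ‖y_k‖²; more precisely ‖x_{k+1}‖² + ‖y_{k+1}‖² - (‖x_k‖² + ‖y_k‖²) ≤ 2h(μ² - (x_kᵀy_k)²) < 0. -/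
open BigOperators

/-- If `‖x‖² + ‖y‖² ≤ 2/h` and `|xᵀy| > μ > 0`, then the GD step decreases
`‖x‖² + ‖y‖²`; more precisely `u₊² - u² ≤ 2h(μ² - (xᵀy)²) < 0`. -/
theorem gd_one_step_decrease_inner_ball {d : ℕ} (μ h : ℝ) (hμ : 0 < μ) (hh : 0 < h)
    (x y : Fin d → ℝ)
    (hu : (∑ i, x i ^ 2) + ∑ i, y i ^ 2 ≤ 2 / h)
    (hxy : μ < |∑ i, x i * y i|) :
    ((∑ i, (x i + h * (μ - ∑ j, x j * y j) * y i) ^ 2)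
        + (∑ i, (y i + h * (μ - ∑ j, x j * y j) * x i) ^ 2))
        - ((∑ i, x i ^ 2) + ∑ i, y i ^ 2)
      ≤ 2 * h * (μ ^ 2 - (∑ i, x i * y i) ^ 2) ∧
    2 * h * (μ ^ 2 - (∑ i, x i * y i) ^ 2) < 0 := by
  set s := ∑ i, x i * y i with hs
  set a := ∑ i, x i ^ 2 with ha
  set b := ∑ i, y i ^ 2 with hb
  set c := h * (μ - s) with hc
  have e1 : (∑ i, (x i + c * y i) ^ 2) = a + 2 * c * s + c ^ 2 * b := by
    rw [ha, hs, hb, Finset.mul_sum, Finset.mul_sum,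
      ← Finset.sum_add_distrib, ← Finset.sum_add_distrib]
    exact Finset.sum_congr rfl fun i _ => by ring
  have e2 : (∑ i, (y i + c * x i) ^ 2) = b + 2 * c * s + c ^ 2 * a := by
    rw [ha, hs, hb, Finset.mul_sum, Finset.mul_sum,
      ← Finset.sum_add_distrib, ← Finset.sum_add_distrib]
    exact Finset.sum_congr rfl fun i _ => by ring
  rw [e1, e2]
  have hab : h * (a + b) ≤ 2 := by
    rw [← le_div_iff₀' hh]; exact hu
  have hμs : μ ^ 2 < s ^ 2 := by
    have := sq_lt_sq' (by linarith [abs_nonneg s, neg_abs_le s] : -|s| < μ) hxy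
    calc μ ^ 2 < |s| ^ 2 := this
      _ = s ^ 2 := sq_abs s
  have hab0 : 0 ≤ a + b := by
    apply add_nonneg <;> exact Finset.sum_nonneg fun i _ => sq_nonneg _
  constructor
  · have key : 0 ≤ h * (μ - s) ^ 2 * (2 - h * (a + b)) := by
      apply mul_nonneg (mul_nonneg hh.le (sq_nonneg _)); linarith
    rw [hc]; nlinarith [sq_nonneg (μ - s)]
  · nlinarith
end

section
/- For GD on f(x,y) = (μ - xᵀy)²/2 with hμ ≤ 1/3 and -μ ≤ x_kᵀy_k < μ, one has ‖x_{k+1} - y_{k+1}‖ < ‖x_k - y_k‖ whenever x_k ≠ y_k; indeed x_{k+1} - y_{k+1} = (1 - h(μ - x_kᵀy_k))(x_k - y_k) and -1 < 1 - h(μ - x_kᵀy_k) < 1. -/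
open BigOperators

/-- If `hμ ≤ 1/3` and `-μ ≤ xᵀy < μ`, then the GD step contracts `x - y`:
`x₊ - y₊ = (1 - h(μ - xᵀy))(x - y)` with `-1 < 1 - h(μ - xᵀy) < 1`, hence
`‖x₊ - y₊‖ < ‖x - y‖` whenever `x ≠ y`. -/
theorem gd_difference_contraction {d : ℕ} (μ h : ℝ) (hμ : 0 < μ) (hh : 0 < h)
    (hhμ : h * μ ≤ 1 / 3) (x y : Fin d → ℝ)
    (hlb : -μ ≤ ∑ i, x i * y i) (hub : ∑ i, x i * y i < μ) :
    ((fun i => (x i + h * (μ - ∑ j, x j * y j) * y i)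
        - (y i + h * (μ - ∑ j, x j * y j) * x i))
      = fun i => (1 - h * (μ - ∑ j, x j * y j)) * (x i - y i)) ∧
    (-1 < 1 - h * (μ - ∑ i, x i * y i) ∧ 1 - h * (μ - ∑ i, x i * y i) < 1) ∧
    (x ≠ y →
      Real.sqrt (∑ i, ((x i + h * (μ - ∑ j, x j * y j) * y i)
          - (y i + h * (μ - ∑ j, x j * y j) * x i)) ^ 2)
        < Real.sqrt (∑ i, (x i - y i) ^ 2)) := by
  set s := ∑ i, x i * y i with hs
  set c := 1 - h * (μ - s) with hc
  have h1 : c < 1 := by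
    have : 0 < h * (μ - s) := mul_pos hh (by linarith)
    linarith
  have h2 : -1 < c := by
    have hms : μ - s ≤ 2 * μ := by linarith
    have : h * (μ - s) ≤ h * (2 * μ) := by nlinarith
    nlinarith
  refine ⟨by funext i; ring, ⟨h2, h1⟩, fun hne => ?_⟩
  have hd : ∃ i, x i ≠ y i := by
    by_contra hcon
    push_neg at hcon
    exact hne (funext hcon)
  obtain ⟨i0, hi0⟩ := hd
  have hpos : 0 < ∑ i, (x i - y i) ^ 2 := by
    apply Finset.sum_pos' (fun i _ => sq_nonneg _)
    exact ⟨i0, Finset.mem_univ _, by have := sub_ne_zero.mpr hi0; positivity⟩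
  have heq : (∑ i, ((x i + h * (μ - s) * y i) - (y i + h * (μ - s) * x i)) ^ 2)
      = c ^ 2 * ∑ i, (x i - y i) ^ 2 := by
    rw [Finset.mul_sum]
    congr 1; funext i; ring
  rw [heq]
  apply Real.sqrt_lt_sqrt (by positivity)
  have hc2 : c ^ 2 < 1 := by nlinarith
  nlinarith
end

section
/- For GD on f(x,y) = (μ - xᵀy)²/2, if ‖x_k‖² + ‖y_k‖² ≤ 2/h, then ‖x_{k+1}‖² + ‖y_{k+1}‖² - (‖x_k‖²+‖y_k‖²) ≤ 4hμ²/(4 - h(‖x_k‖²+‖y_k‖²)), with equality attained at x_kᵀy_k = ((2 - hu_k²)/(4 - hu_k²))μ where u_k² = ‖x_k‖²+‖y_k‖². -/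
open BigOperators

/-- If `‖x‖² + ‖y‖² ≤ 2/h`, the GD step increases `‖x‖² + ‖y‖²` by at most
`4hμ²/(4 - h(‖x‖²+‖y‖²))`, with equality attained at
`xᵀy = ((2 - hu²)/(4 - hu²))μ`. -/
theorem gd_one_step_increase_bound {d : ℕ} (μ h : ℝ) (hμ : 0 < μ) (hh : 0 < h)
    (x y : Fin d → ℝ)
    (hu : (∑ i, x i ^ 2) + ∑ i, y i ^ 2 ≤ 2 / h) :
    (((∑ i, (x i + h * (μ - ∑ j, x j * y j) * y i) ^ 2)
        + (∑ i, (y i + h * (μ - ∑ j, x j * y j) * x i) ^ 2))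
        - ((∑ i, x i ^ 2) + ∑ i, y i ^ 2)
      ≤ 4 * h * μ ^ 2 / (4 - h * ((∑ i, x i ^ 2) + ∑ i, y i ^ 2))) ∧
    ((∑ i, x i * y i) =
        ((2 - h * ((∑ i, x i ^ 2) + ∑ i, y i ^ 2))
          / (4 - h * ((∑ i, x i ^ 2) + ∑ i, y i ^ 2))) * μ →
      ((∑ i, (x i + h * (μ - ∑ j, x j * y j) * y i) ^ 2)
        + (∑ i, (y i + h * (μ - ∑ j, x j * y j) * x i) ^ 2))
        - ((∑ i, x i ^ 2) + ∑ i, y i ^ 2)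
      = 4 * h * μ ^ 2 / (4 - h * ((∑ i, x i ^ 2) + ∑ i, y i ^ 2))) := by
  set s : ℝ := ∑ i, x i ^ 2 with hs
  set t : ℝ := ∑ i, y i ^ 2 with ht
  set p : ℝ := ∑ j, x j * y j with hp
  set c : ℝ := h * (μ - p) with hc
  have e1 : (∑ i, (x i + c * y i) ^ 2) = s + 2 * c * p + c ^ 2 * t := by
    rw [hs, hp, ht, Finset.mul_sum, Finset.mul_sum,
      ← Finset.sum_add_distrib, ← Finset.sum_add_distrib]
    exact Finset.sum_congr rfl fun i _ => by ring
  have e2 : (∑ i, (y i + c * x i) ^ 2) = t + 2 * c * p + c ^ 2 * s := by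
    rw [hs, hp, ht, Finset.mul_sum, Finset.mul_sum,
      ← Finset.sum_add_distrib, ← Finset.sum_add_distrib]
    exact Finset.sum_congr rfl fun i _ => by ring
  rw [e1, e2]
  have ha : 0 < 4 - h * (s + t) := by
    have : h * (s + t) ≤ 2 := by
      rw [← le_div_iff₀' hh]; exact hu
    linarith
  constructor
  · rw [le_div_iff₀ hh] at hu
    rw [le_div_iff₀ ha, hc]
    nlinarith [mul_nonneg hh.le
      (sq_nonneg ((4 - h * (s + t)) * p + (h * (s + t) - 2) * μ))]
  · intro hpe
    have hane : 4 - h * (s + t) ≠ 0 := ne_of_gt ha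
    rw [eq_div_iff hane]
    have : p * (4 - h * (s + t)) = (2 - h * (s + t)) * μ := by
      rw [hpe]; field_simp
    rw [hc, hpe]
    field_simp
    ring
end

section
/- For GD on F(x,y) = ‖μI - xyᵀ‖_F²/2 with x,y ∈ ℝⁿ, writing U_k = x_kᵀy_k, V_k = ‖x_k‖², W_k = ‖y_k‖², the iteration x_{k+1} = x_k + h(μI - x_ky_kᵀ)y_k, y_{k+1} = y_k + h(μI - y_kx_kᵀ)x_k satisfies V_{k+1}W_{k+1} - U_{k+1}² = (V_kW_k - U_k²)·(1 - h(V_k + W_k) + h²(V_kW_k - μ²))². -/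
/-!
One gradient step replaces the pair `(x, y)` by `(a x + b y, b x + c y)` with
`a = 1 - h‖y‖²`, `b = hμ`, `c = 1 - h‖x‖²`. A Gram determinant changes under such a change of
basis by the square of its determinant `ac - b²`, which expands to
`1 - h(V + W) + h²(VW - μ²)`.
-/

open Matrix

def gramDet {R ι : Type*} [CommRing R] [Fintype ι] (x y : ι → R) : R :=
  (x ⬝ᵥ x) * (y ⬝ᵥ y) - (x ⬝ᵥ y) ^ 2

theorem gramDet_smul_add_smul {R ι : Type*} [CommRing R] [Fintype ι]
    (x y : ι → R) (a b c d : R) :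
    gramDet (a • x + b • y) (c • x + d • y) = (a * d - b * c) ^ 2 * gramDet x y := by
  simp only [gramDet, add_dotProduct, dotProduct_add, smul_dotProduct, dotProduct_smul,
    smul_eq_mul, dotProduct_comm y x]
  ring

theorem sum_sq_eq_dotProduct_self {R ι : Type*} [CommSemiring R] [Fintype ι] (v : ι → R) :
    ∑ i, v i ^ 2 = v ⬝ᵥ v := by
  simp only [dotProduct, sq]

theorem rank1_alignment_identity_general {n : ℕ} (μ h : ℝ)
    (x y : Fin n → ℝ) :
    (∑ i, (x i + h * (μ * y i - (∑ j, y j ^ 2) * x i)) ^ 2) *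
        (∑ i, (y i + h * (μ * x i - (∑ j, x j ^ 2) * y i)) ^ 2) -
      (∑ i, (x i + h * (μ * y i - (∑ j, y j ^ 2) * x i)) *
          (y i + h * (μ * x i - (∑ j, x j ^ 2) * y i))) ^ 2
    = ((∑ i, x i ^ 2) * (∑ i, y i ^ 2) - (∑ i, x i * y i) ^ 2) *
        (1 - h * ((∑ i, x i ^ 2) + ∑ i, y i ^ 2)
          + h ^ 2 * ((∑ i, x i ^ 2) * (∑ i, y i ^ 2) - μ ^ 2)) ^ 2 := by
  simp only [sum_sq_eq_dotProduct_self, ← dotProduct.eq_1]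
  have hx_step : (fun i ↦ x i + h * (μ * y i - (y ⬝ᵥ y) * x i)) =
      (1 - h * (y ⬝ᵥ y)) • x + (h * μ) • y := by
    funext i
    simp only [Pi.add_apply, Pi.smul_apply, smul_eq_mul]
    ring
  have hy_step : (fun i ↦ y i + h * (μ * x i - (x ⬝ᵥ x) * y i)) =
      (h * μ) • x + (1 - h * (x ⬝ᵥ x)) • y := by
    funext i
    simp only [Pi.add_apply, Pi.smul_apply, smul_eq_mul]
    ring
  rw [hx_step, hy_step]
  simp only [← gramDet.eq_1]
  rw [gramDet_smul_add_smul]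
  ring

/-- For GD on `F(x,y) = ‖μI - xyᵀ‖_F²/2`, with `U = xᵀy`, `V = ‖x‖²`, `W = ‖y‖²`,
the update `x₊ = x + h(μI - xyᵀ)y`, `y₊ = y + h(μI - yxᵀ)x` satisfies
`V₊W₊ - U₊² = (VW - U²)(1 - h(V + W) + h²(VW - μ²))²`. -/
theorem rank1_alignment_identity {n : ℕ} (μ h : ℝ) (hμ : 0 < μ) (hh : 0 < h)
    (x y : Fin n → ℝ) :
    (∑ i, (x i + h * (μ * y i - (∑ j, y j ^ 2) * x i)) ^ 2) *
        (∑ i, (y i + h * (μ * x i - (∑ j, x j ^ 2) * y i)) ^ 2) -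
      (∑ i, (x i + h * (μ * y i - (∑ j, y j ^ 2) * x i)) *
          (y i + h * (μ * x i - (∑ j, x j ^ 2) * y i))) ^ 2
    = ((∑ i, x i ^ 2) * (∑ i, y i ^ 2) - (∑ i, x i * y i) ^ 2) *
        (1 - h * ((∑ i, x i ^ 2) + ∑ i, y i ^ 2)
          + h ^ 2 * ((∑ i, x i ^ 2) * (∑ i, y i ^ 2) - μ ^ 2)) ^ 2 :=
  rank1_alignment_identity_general μ h x y
end

section
/- Fixed points of GD for rank-1 approximation of a non-negative diagonal matrix: let A ∈ ℝ^{n×n} be diagonal with diagonal blocks μ_i I_{n_i} (μ_i ≥ 0 pairwise distinct). If (x,y) ∈ ℝⁿ×ℝⁿ satisfies (A - xyᵀ)y = 0 and (A - yxᵀ)ᵀx = 0 and (x,y) ≠ (0,0), then there is a unique index i such that x_s = y_s = 0 for all coordinates s outside block i, and ‖x‖²·‖y‖² = μ_i². -/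
open Matrix BigOperators

/-- Fixed points of GD for rank-1 approximation of a non-negative block-diagonal
matrix `A = diag(μ₁ I_{n₁}, …, μ_m I_{n_m})` (with `μ_i ≥ 0` pairwise distinct):
if `(x,y) ≠ (0,0)` satisfies `Ay = ‖y‖² x` and `Ax = ‖x‖² y`, then there is a
unique block `i` such that `x` and `y` vanish outside block `i` and
`‖x‖² ‖y‖² = μ_i²`. -/
theorem rank1_diagonal_fixed_points {m : ℕ} (n : Fin m → ℕ) (μ : Fin m → ℝ)
    (hμ0 : ∀ i, 0 ≤ μ i) (hμinj : Function.Injective μ)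
    (x y : (Σ i, Fin (n i)) → ℝ)
    (hfix1 : (Matrix.diagonal fun s : Σ i, Fin (n i) => μ s.1) *ᵥ y
      = (∑ s, y s ^ 2) • x)
    (hfix2 : (Matrix.diagonal fun s : Σ i, Fin (n i) => μ s.1) *ᵥ x
      = (∑ s, x s ^ 2) • y)
    (hne : ¬(x = 0 ∧ y = 0)) :
    ∃! i : Fin m,
      (∀ s : Σ i, Fin (n i), s.1 ≠ i → x s = 0 ∧ y s = 0) ∧
      (∑ s, x s ^ 2) * (∑ s, y s ^ 2) = μ i ^ 2 := by
  set X := ∑ s, x s ^ 2 with hXdef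
  set Y := ∑ s, y s ^ 2 with hYdef
  have h1 : ∀ t : Σ i, Fin (n i), μ t.1 * y t = Y * x t := by
    intro t
    have := congrFun hfix1 t
    simpa [Matrix.mulVec_diagonal] using this
  have h2 : ∀ t : Σ i, Fin (n i), μ t.1 * x t = X * y t := by
    intro t
    have := congrFun hfix2 t
    simpa [Matrix.mulVec_diagonal] using this
  have hx : ∀ t : Σ i, Fin (n i), μ t.1 ^ 2 * x t = (X * Y) * x t := by
    intro t
    linear_combination μ t.1 * h2 t + X * h1 t
  have hy : ∀ t : Σ i, Fin (n i), μ t.1 ^ 2 * y t = (X * Y) * y t := by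
    intro t
    linear_combination μ t.1 * h1 t + Y * h2 t
  obtain ⟨s, hs⟩ : ∃ s, x s ≠ 0 ∨ y s ≠ 0 := by
    by_contra h
    push_neg at h
    exact hne ⟨funext fun t => (h t).1, funext fun t => (h t).2⟩
  have hμs : μ s.1 ^ 2 = X * Y := by
    rcases hs with hs | hs
    · exact mul_right_cancel₀ hs (hx s)
    · exact mul_right_cancel₀ hs (hy s)
  have key : ∀ j : Fin m, μ j ^ 2 = X * Y → j = s.1 := by
    intro j hj
    have h' : μ j = μ s.1 := by nlinarith [hμ0 j, hμ0 s.1]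
    exact hμinj h'
  refine ⟨s.1, ⟨fun t ht => ?_, by linarith [hμs]⟩, fun j hj => key j (by linarith [hj.2])⟩
  constructor
  · by_contra hxt
    exact ht (key t.1 (mul_right_cancel₀ hxt (hx t)))
  · by_contra hyt
    exact ht (key t.1 (mul_right_cancel₀ hyt (hy t)))
end

section
/- Alignment at global minima: for the rank-1 approximation of a non-negative diagonal matrix A with largest diagonal value μ_max > 0, any global minimizer (x,y) of ‖A - xyᵀ‖_F²/2 satisfies xᵀy = μ_max and ‖x‖·‖y‖ = μ_max, hence x = ℓy for some scalar ℓ > 0. -/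
open Matrix BigOperators

/-- Alignment at global minima: for rank-1 approximation of a non-negative
diagonal matrix `A` with largest diagonal value `μmax > 0`, any global minimizer
`(x,y)` of `‖A - xyᵀ‖_F²/2` satisfies `xᵀy = μmax`, `‖x‖‖y‖ = μmax`, and hence
`x = ℓ y` for some `ℓ > 0`. -/
theorem rank1_global_min_alignment {n : ℕ} (d : Fin n → ℝ) (hd : ∀ i, 0 ≤ d i)
    (μmax : ℝ) (hμpos : 0 < μmax) (i₀ : Fin n) (hi₀ : d i₀ = μmax)
    (hmax : ∀ i, d i ≤ μmax) (x y : Fin n → ℝ)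
    (hmin : ∀ x' y' : Fin n → ℝ,
      (∑ i, ∑ j, (Matrix.diagonal d i j - x i * y j) ^ 2) / 2 ≤
        (∑ i, ∑ j, (Matrix.diagonal d i j - x' i * y' j) ^ 2) / 2) :
    (∑ i, x i * y i = μmax) ∧
    Real.sqrt (∑ i, x i ^ 2) * Real.sqrt (∑ i, y i ^ 2) = μmax ∧
    ∃ ℓ : ℝ, 0 < ℓ ∧ x = ℓ • y := by
  classical
  -- expansion of the objective
  have expand : ∀ u v : Fin n → ℝ,
      (∑ i, ∑ j, (Matrix.diagonal d i j - u i * v j) ^ 2)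
        = (∑ i, d i ^ 2) - 2 * (∑ i, d i * (u i * v i))
          + (∑ i, u i ^ 2) * (∑ i, v i ^ 2) := by
    intro u v
    have e1 : ∀ i, ∑ j, (Matrix.diagonal d i j) ^ 2 = d i ^ 2 := by
      intro i
      rw [Finset.sum_eq_single i]
      · simp
      · intro j _ hj
        simp [Matrix.diagonal_apply, (Ne.symm hj : i ≠ j)]
      · simp
    have e2 : ∀ i, ∑ j, Matrix.diagonal d i j * (u i * v j) = d i * (u i * v i) := by
      intro i
      rw [Finset.sum_eq_single i]
      · simp
      · intro j _ hj
        simp [Matrix.diagonal_apply, (Ne.symm hj : i ≠ j)]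
      · simp
    have h1 : ∀ i j, (Matrix.diagonal d i j - u i * v j) ^ 2
        = (Matrix.diagonal d i j) ^ 2 - 2 * (Matrix.diagonal d i j * (u i * v j))
          + u i ^ 2 * v j ^ 2 := by intro i j; ring
    have h2 : ∀ i, ∑ j, (Matrix.diagonal d i j - u i * v j) ^ 2
        = d i ^ 2 - 2 * (d i * (u i * v i)) + u i ^ 2 * (∑ j, v j ^ 2) := by
      intro i
      simp_rw [h1]
      rw [Finset.sum_add_distrib, Finset.sum_sub_distrib, e1 i, ← Finset.mul_sum, e2 i,
        ← Finset.mul_sum]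
    simp_rw [h2]
    rw [Finset.sum_add_distrib, Finset.sum_sub_distrib, ← Finset.mul_sum, ← Finset.sum_mul]
  set sx := ∑ i, x i ^ 2 with hsxdef
  set sy := ∑ i, y i ^ 2 with hsydef
  set T := ∑ i, d i * (x i * y i) with hTdef
  have hsx0 : 0 ≤ sx := Finset.sum_nonneg fun i _ => sq_nonneg _
  have hsy0 : 0 ≤ sy := Finset.sum_nonneg fun i _ => sq_nonneg _
  -- candidate point
  set u : Fin n → ℝ := fun i => if i = i₀ then Real.sqrt μmax else 0 with hu
  have huu : ∀ i, u i * u i = if i = i₀ then μmax else 0 := by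
    intro i; simp only [hu]; split <;> simp [Real.mul_self_sqrt hμpos.le]
  have hGu : (∑ i, d i * (u i * u i)) = μmax ^ 2 := by
    simp_rw [huu, mul_ite, mul_zero]
    rw [Finset.sum_ite_eq' Finset.univ i₀ fun i => d i * μmax]
    simp [hi₀]; ring
  have hSu : (∑ i, u i ^ 2) = μmax := by
    have : ∀ i, u i ^ 2 = if i = i₀ then μmax else 0 := by
      intro i; rw [sq]; exact huu i
    simp_rw [this]
    rw [Finset.sum_ite_eq' Finset.univ i₀ fun _ => μmax]
    simp
  -- key inequality from minimality
  have hkey : sx * sy + μmax ^ 2 ≤ 2 * T := by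
    have := hmin u u
    rw [expand x y, expand u u, hGu, hSu] at this
    nlinarith [this]
  -- Cauchy-Schwarz with absolute values
  set P := ∑ i, |x i| * |y i| with hPdef
  have hP0 : 0 ≤ P := Finset.sum_nonneg fun i _ => mul_nonneg (abs_nonneg _) (abs_nonneg _)
  have hCS : P ^ 2 ≤ sx * sy := by
    have := Finset.sum_mul_sq_le_sq_mul_sq Finset.univ (fun i => |x i|) (fun i => |y i|)
    simpa [sq_abs] using this
  have hTP : T ≤ μmax * P := by
    rw [hTdef, hPdef, Finset.mul_sum]
    apply Finset.sum_le_sum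
    intro i _
    have h1 : x i * y i ≤ |x i| * |y i| := by
      rw [← abs_mul]; exact le_abs_self _
    have h2 : 0 ≤ |x i| * |y i| := mul_nonneg (abs_nonneg _) (abs_nonneg _)
    nlinarith [hd i, hmax i, abs_nonneg (x i * y i)]
  set s := Real.sqrt sx * Real.sqrt sy with hsdef
  have hs0 : 0 ≤ s := mul_nonneg (Real.sqrt_nonneg _) (Real.sqrt_nonneg _)
  have hssq : s ^ 2 = sx * sy := by
    rw [hsdef, mul_pow, Real.sq_sqrt hsx0, Real.sq_sqrt hsy0]
  have hPs : P ≤ s := by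
    nlinarith [hCS, hssq, hs0, hP0]
  have hTs : T ≤ μmax * s :=
    le_trans hTP (mul_le_mul_of_nonneg_left hPs hμpos.le)
  have hsqle : (s - μmax) ^ 2 ≤ 0 := by nlinarith [hkey, hTs, hssq]
  have hseq : s = μmax := by nlinarith [sq_nonneg (s - μmax)]
  have hsxsy : sx * sy = μmax ^ 2 := by rw [← hssq, hseq]
  rw [hseq] at hTs hPs
  have hμsq : μmax * μmax = μmax ^ 2 := (sq μmax).symm
  have hTeq : T = μmax ^ 2 := by linarith [hkey, hsxsy, hTs, hμsq]
  have hPge : μmax * μmax ≤ μmax * P := by rw [hμsq]; linarith [hTP, hTeq]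
  have hPeq : P = μmax := le_antisymm hPs (le_of_mul_le_mul_left hPge hμpos)
  -- termwise equality : μmax * |x i y i| = d i * (x i * y i)
  have hsum0 : ∑ i, (μmax * (|x i| * |y i|) - d i * (x i * y i)) = 0 := by
    rw [Finset.sum_sub_distrib, ← Finset.mul_sum, ← hPdef, ← hTdef, hPeq, hTeq]; ring
  have hnn : ∀ i ∈ Finset.univ, (0:ℝ) ≤ μmax * (|x i| * |y i|) - d i * (x i * y i) := by
    intro i _
    have h1 : x i * y i ≤ |x i| * |y i| := by
      rw [← abs_mul]; exact le_abs_self _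
    have h2 : 0 ≤ |x i| * |y i| := mul_nonneg (abs_nonneg _) (abs_nonneg _)
    have h3 : d i * (x i * y i) ≤ d i * (|x i| * |y i|) :=
      mul_le_mul_of_nonneg_left h1 (hd i)
    have h4 : d i * (|x i| * |y i|) ≤ μmax * (|x i| * |y i|) :=
      mul_le_mul_of_nonneg_right (hmax i) h2
    linarith
  have hterm : ∀ i ∈ Finset.univ, μmax * (|x i| * |y i|) - d i * (x i * y i) = 0 :=
    (Finset.sum_eq_zero_iff_of_nonneg hnn).mp hsum0
  have hxy_abs : ∀ i, x i * y i = |x i| * |y i| := by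
    intro i
    have h := hterm i (Finset.mem_univ i)
    by_contra hne
    have h1 : x i * y i < |x i| * |y i| := by
      rw [← abs_mul] at *
      exact lt_of_le_of_ne (le_abs_self _) (by exact fun h' => hne h')
    rcases le_or_gt 0 (x i * y i) with h' | h'
    · have habs : |x i| * |y i| = x i * y i := by rw [← abs_mul, abs_of_nonneg h']
      linarith [h1]
    · have habs : |x i| * |y i| = -(x i * y i) := by rw [← abs_mul, abs_of_neg h']
      have hdn : d i * (x i * y i) ≤ 0 := mul_nonpos_iff.mpr (Or.inl ⟨hd i, h'.le⟩)
      have hpos : 0 < μmax * (|x i| * |y i|) := by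
        rw [habs]; exact mul_pos hμpos (by linarith)
      linarith [h]
  have hfirst : ∑ i, x i * y i = μmax := by
    rw [Finset.sum_congr rfl fun i _ => hxy_abs i]; exact hPeq
  have hs' : Real.sqrt sx * Real.sqrt sy = μmax := by rw [← hsdef]; exact hseq
  refine ⟨hfirst, hseq, ?_⟩
  set c := Real.sqrt sx with hcdef
  set e := Real.sqrt sy with hedef
  have hcpos : 0 < c := by
    rcases (Real.sqrt_nonneg sx).lt_or_eq with h | h
    · exact h
    · exfalso
      rw [hcdef, ← h, zero_mul] at hs'
      exact absurd hs' (by linarith)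
  have hepos : 0 < e := by
    rcases (Real.sqrt_nonneg sy).lt_or_eq with h | h
    · exact h
    · exfalso
      rw [hedef, ← h, mul_zero] at hs'
      exact absurd hs' (by linarith)
  have hterm2 : ∀ i : Fin n, (e * x i - c * y i) ^ 2
      = e ^ 2 * x i ^ 2 + c ^ 2 * y i ^ 2 - 2 * (c * e) * (x i * y i) := fun i => by ring
  have hz : ∑ i, (e * x i - c * y i) ^ 2
      = e ^ 2 * sx + c ^ 2 * sy - 2 * (c * e) * (∑ i, x i * y i) := by
    simp_rw [hterm2]
    rw [Finset.sum_sub_distrib, Finset.sum_add_distrib, ← Finset.mul_sum, ← Finset.mul_sum,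
      ← Finset.mul_sum, ← hsxdef, ← hsydef]
  have hz0 : ∑ i, (e * x i - c * y i) ^ 2 = 0 := by
    rw [hz, hfirst]
    have h1 : e ^ 2 = sy := Real.sq_sqrt hsy0
    have h2 : c ^ 2 = sx := Real.sq_sqrt hsx0
    rw [h1, h2, hs']
    linear_combination 2 * hsxsy
  have heach : ∀ i, e * x i - c * y i = 0 := by
    intro i
    have h := (Finset.sum_eq_zero_iff_of_nonneg (fun i _ => sq_nonneg
      (e * x i - c * y i))).mp hz0 i (Finset.mem_univ i)
    exact pow_eq_zero_iff two_ne_zero |>.mp h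
  refine ⟨c / e, div_pos hcpos hepos, ?_⟩
  funext i
  have h := heach i
  have hx : x i = c / e * y i := by
    rw [div_mul_eq_mul_div, eq_div_iff (ne_of_gt hepos)]
    linarith
  simpa [Pi.smul_apply, smul_eq_mul] using hx
end

section
/- Stability implies balancing for rank-1 approximation: let A ∈ ℝ^{n×n} be diagonal non-negative with distinct positive maximal value μ_max. If (x,y) is a global minimizer of ‖A - xyᵀ‖_F²/2 that is a linearly stable fixed point of GD with step h > 0 (all Jacobian eigenvalues have modulus ≤ 1), then ‖x‖² + ‖y‖² ≤ 2/h, and hence ‖x - y‖² ≤ 2/h - 2μ_max. -/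
open Matrix Polynomial BigOperators

/-- The Jacobian of the GD map `ψ(x,y) = (x + h(A - xyᵀ)y, y + h(Aᵀ - yxᵀ)x)`
at `(x,y)` for `A = diag d`. -/
noncomputable def gdJacobian {n : ℕ} (d : Fin n → ℝ) (h : ℝ) (x y : Fin n → ℝ) :
    Matrix (Fin n ⊕ Fin n) (Fin n ⊕ Fin n) ℝ :=
  1 + Matrix.fromBlocks
    ((-(h * ∑ i, y i ^ 2)) • (1 : Matrix (Fin n) (Fin n) ℝ))
    (h • Matrix.diagonal d - (2 * h) • Matrix.vecMulVec x y)
    (h • (Matrix.diagonal d)ᵀ - (2 * h) • Matrix.vecMulVec y x)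
    ((-(h * ∑ i, x i ^ 2)) • (1 : Matrix (Fin n) (Fin n) ℝ))

/-!
At a global minimiser of `‖D - x yᵀ‖²`, `D = diag d`, the first-order conditions `D y = ‖y‖² x` and
`D x = ‖x‖² y` give `D² x = ‖x‖²‖y‖² x`, and comparison with the competitor `√μ e_{i₀}` gives
`‖x‖²‖y‖² ≥ μ²`. As `μ` is the strict maximum of the non-negative `d`, both `x` and `y` are then
supported on `i₀`, with `x i₀ * y i₀ = μ`. Hence `x yᵀ` is symmetric, and `(y, x)` is an
eigenvector of the GD Jacobian for the eigenvalue `1 - h (‖x‖² + ‖y‖²)`, whose modulus stability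
bounds by `1`. Finally `‖x - y‖² = ‖x‖² + ‖y‖² - 2μ`.
-/

theorem eq_zero_of_forall_mul_add_sq_nonneg {b c : ℝ} (h : ∀ t : ℝ, 0 ≤ b * t + c * t ^ 2) :
    b = 0 := by
  have hdiscrim := discrim_le_zero (a := c) (b := b) (c := 0) fun t => by linarith [h t, sq t]
  rw [discrim] at hdiscrim
  nlinarith [sq_nonneg b]

theorem isRoot_charpoly_of_mulVec_eq_smul {m K : Type*} [Fintype m] [DecidableEq m] [Field K]
    {M : Matrix m m K} {v : m → K} (hv : v ≠ 0) {r : K} (hMv : M *ᵥ v = r • v) :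
    M.charpoly.IsRoot r := by
  rw [IsRoot, eval_charpoly, ← exists_mulVec_eq_zero_iff]
  exact ⟨v, hv, by simp [sub_mulVec, hMv]⟩

theorem eq_single_of_sq_mul_eq {ι : Type*} [DecidableEq ι] {d : ι → ℝ} {μ : ℝ} {i₀ : ι}
    (hd : ∀ i, 0 ≤ d i) (hstrict : ∀ i, i ≠ i₀ → d i < μ)
    {z : ι → ℝ} {c : ℝ} (hz : ∀ j, d j ^ 2 * z j = c * z j) (hc : μ ^ 2 ≤ c) :
    z = Pi.single i₀ (z i₀) := by
  ext j
  by_cases hj : j = i₀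
  · simp [hj]
  · rw [Pi.single_eq_of_ne hj]
    by_contra hzj
    have hdj : d j ^ 2 = c := mul_right_cancel₀ hzj (hz j)
    nlinarith [hd j, hstrict j hj]

section RankOne

variable {ι : Type*} [Fintype ι]

theorem vecMulVec_mulVec_self {x y : ι → ℝ} (hsym : vecMulVec x y = vecMulVec y x) :
    vecMulVec x y *ᵥ x = (∑ i, x i ^ 2) • y := by
  rw [hsym, vecMulVec_mulVec]
  ext i
  simp [dotProduct, sq, mul_comm]

theorem sq_mul_eq_of_critical (d : ι → ℝ) {x y : ι → ℝ}
    (hx : ∀ j, d j * x j = (∑ i, x i ^ 2) * y j) (hy : ∀ j, d j * y j = (∑ i, y i ^ 2) * x j)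
    (j : ι) : d j ^ 2 * x j = ((∑ i, x i ^ 2) * ∑ i, y i ^ 2) * x j := by
  linear_combination d j * hx j + (∑ i, x i ^ 2) * hy j

variable [DecidableEq ι]

noncomputable def rankOneLoss (d x y : ι → ℝ) : ℝ :=
  ∑ i, ∑ j, (diagonal d i j - x i * y j) ^ 2

variable (d : ι → ℝ)

theorem rankOneLoss_eq (x y : ι → ℝ) :
    rankOneLoss d x y =
      ∑ i, d i ^ 2 - 2 * ∑ i, d i * x i * y i + (∑ i, x i ^ 2) * ∑ i, y i ^ 2 := by
  have hrow : ∀ i, ∑ j, (diagonal d i j - x i * y j) ^ 2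
      = d i ^ 2 - 2 * (d i * x i * y i) + x i ^ 2 * ∑ j, y j ^ 2 := by
    intro i
    simp only [sub_sq, mul_pow, Finset.sum_add_distrib, Finset.sum_sub_distrib, ← Finset.mul_sum,
      diagonal_apply]
    simp only [ite_pow, ne_eq, OfNat.ofNat_ne_zero, not_false_eq_true, zero_pow, mul_ite,
      mul_zero, ite_mul, zero_mul, Finset.sum_ite_eq, Finset.mem_univ, ↓reduceIte]
    ring
  simp only [rankOneLoss, hrow, Finset.sum_add_distrib, Finset.sum_sub_distrib, ← Finset.mul_sum,
    ← Finset.sum_mul]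

theorem rankOneLoss_comm (x y : ι → ℝ) : rankOneLoss d x y = rankOneLoss d y x := by
  simp only [rankOneLoss_eq, mul_right_comm _ (x _), mul_comm (∑ i, x i ^ 2)]

theorem rankOneLoss_add_single (x y : ι → ℝ) (j : ι) (t : ℝ) :
    rankOneLoss d (x + Pi.single j t) y = rankOneLoss d x y
      + 2 * ((∑ i, y i ^ 2) * x j - d j * y j) * t + (∑ i, y i ^ 2) * t ^ 2 := by
  have hcross : ∑ i, d i * (x + Pi.single j t : ι → ℝ) i * y i
      = ∑ i, d i * x i * y i + d j * t * y j := by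
    simp [mul_add, add_mul, Finset.sum_add_distrib, Pi.single_apply]
  have hnorm : ∑ i, (x + Pi.single j t : ι → ℝ) i ^ 2 = ∑ i, x i ^ 2 + 2 * x j * t + t ^ 2 := by
    simp [add_sq, Finset.sum_add_distrib, Pi.single_apply, ite_pow]
  rw [rankOneLoss_eq, rankOneLoss_eq, hcross, hnorm]
  ring

theorem mul_eq_of_forall_rankOneLoss_le_left {x y : ι → ℝ}
    (hmin : ∀ x', rankOneLoss d x y ≤ rankOneLoss d x' y) (j : ι) :
    d j * y j = (∑ i, y i ^ 2) * x j := by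
  have h := eq_zero_of_forall_mul_add_sq_nonneg
    (b := 2 * ((∑ i, y i ^ 2) * x j - d j * y j)) (c := ∑ i, y i ^ 2) fun t => by
      linarith [hmin (x + Pi.single j t), rankOneLoss_add_single d x y j t]
  linarith

theorem mul_eq_of_forall_rankOneLoss_le_right {x y : ι → ℝ}
    (hmin : ∀ y', rankOneLoss d x y ≤ rankOneLoss d x y') (j : ι) :
    d j * x j = (∑ i, x i ^ 2) * y j :=
  mul_eq_of_forall_rankOneLoss_le_left d
    (fun y' => by simpa only [rankOneLoss_comm d _ x] using hmin y') j

theorem rankOneLoss_of_critical {x y : ι → ℝ}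
    (hy : ∀ j, d j * y j = (∑ i, y i ^ 2) * x j) :
    rankOneLoss d x y = ∑ i, d i ^ 2 - (∑ i, x i ^ 2) * ∑ i, y i ^ 2 := by
  have hcross : ∑ i, d i * x i * y i = (∑ i, x i ^ 2) * ∑ i, y i ^ 2 := by
    simp only [Finset.sum_mul]
    exact Finset.sum_congr rfl fun i _ => by linear_combination x i * hy i
  rw [rankOneLoss_eq, hcross]
  ring

theorem rankOneLoss_single_sqrt {μ : ℝ} (hμ : 0 ≤ μ) {i₀ : ι} (hi₀ : d i₀ = μ) :
    rankOneLoss d (Pi.single i₀ √μ) (Pi.single i₀ √μ) = ∑ i, d i ^ 2 - μ ^ 2 := by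
  rw [rankOneLoss_of_critical d fun j => ?_]
  · simp [Pi.single_apply, ite_pow, Real.sq_sqrt hμ, sq]
  · by_cases hj : j = i₀
    · subst hj
      simp [hi₀, Real.sq_sqrt hμ, Pi.single_apply, ite_pow]
    · simp [Pi.single_apply, hj]

variable {d} {μ : ℝ} {i₀ : ι}

theorem sq_le_of_isMin (hμ : 0 ≤ μ) (hi₀ : d i₀ = μ) {x y : ι → ℝ}
    (hmin : ∀ x' y', rankOneLoss d x y ≤ rankOneLoss d x' y') :
    μ ^ 2 ≤ (∑ i, x i ^ 2) * ∑ i, y i ^ 2 := by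
  have hy := mul_eq_of_forall_rankOneLoss_le_left d fun x' => hmin x' y
  have hcomp := hmin (Pi.single i₀ √μ) (Pi.single i₀ √μ)
  rw [rankOneLoss_of_critical d hy, rankOneLoss_single_sqrt d hμ hi₀] at hcomp
  linarith

theorem exists_eq_single_of_isMin (hd : ∀ i, 0 ≤ d i) (hμ : 0 < μ) (hi₀ : d i₀ = μ)
    (hstrict : ∀ i, i ≠ i₀ → d i < μ) {x y : ι → ℝ}
    (hmin : ∀ x' y', rankOneLoss d x y ≤ rankOneLoss d x' y') :
    ∃ a b, x = Pi.single i₀ a ∧ y = Pi.single i₀ b ∧ a * b = μ := by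
  have hx := mul_eq_of_forall_rankOneLoss_le_right d fun y' => hmin x y'
  have hy := mul_eq_of_forall_rankOneLoss_le_left d fun x' => hmin x' y
  have hle := sq_le_of_isMin hμ.le hi₀ hmin
  have hx₀ := eq_single_of_sq_mul_eq hd hstrict (sq_mul_eq_of_critical d hx hy) hle
  have hy₀ := eq_single_of_sq_mul_eq hd hstrict (sq_mul_eq_of_critical d hy hx) (by linarith)
  refine ⟨x i₀, y i₀, hx₀, hy₀, ?_⟩
  have hX : ∑ i, x i ^ 2 = x i₀ ^ 2 := by rw [hx₀]; simp [Pi.single_apply, ite_pow]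
  have hY : ∑ i, y i ^ 2 = y i₀ ^ 2 := by rw [hy₀]; simp [Pi.single_apply, ite_pow]
  have hb : y i₀ ≠ 0 := by
    intro hb
    rw [hX, hY, hb] at hle
    nlinarith
  have hcrit := hy i₀
  rw [hi₀, hY] at hcrit
  exact mul_right_cancel₀ hb (by linear_combination -hcrit)

end RankOne

theorem gdJacobian_mulVec_sumElim {n : ℕ} (d : Fin n → ℝ) (h : ℝ) {x y : Fin n → ℝ}
    (hx : ∀ i, d i * x i = (∑ j, x j ^ 2) * y i) (hy : ∀ i, d i * y i = (∑ j, y j ^ 2) * x i)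
    (hsym : vecMulVec x y = vecMulVec y x) :
    gdJacobian d h x y *ᵥ Sum.elim y x
      = (1 - h * ((∑ i, x i ^ 2) + ∑ i, y i ^ 2)) • Sum.elim y x := by
  have hxx := vecMulVec_mulVec_self hsym
  have hyy := vecMulVec_mulVec_self hsym.symm
  simp only [gdJacobian, add_mulVec, one_mulVec, fromBlocks_mulVec, Sum.elim_comp_inl,
    Sum.elim_comp_inr, diagonal_transpose, sub_mulVec, smul_mulVec, neg_smul, neg_mulVec, hxx, hyy]
  ext (i | i)
  · simp only [Pi.add_apply, Pi.sub_apply, Pi.neg_apply, Pi.smul_apply, Sum.elim_inl, smul_eq_mul,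
      mulVec_diagonal, hx]
    ring
  · simp only [Pi.add_apply, Pi.sub_apply, Pi.neg_apply, Pi.smul_apply, Sum.elim_inr, smul_eq_mul,
      mulVec_diagonal, hy]
    ring

/-- Stability implies balancing for rank-1 approximation: if `A = diag d ≥ 0` has
a distinct positive maximal value `μmax` and `(x,y)` is a global minimizer of
`‖A - xyᵀ‖_F²/2` which is a linearly stable fixed point of GD with step `h > 0`
(all eigenvalues of the Jacobian have complex modulus at most `1`), then
`‖x‖² + ‖y‖² ≤ 2/h` and hence `‖x - y‖² ≤ 2/h - 2μmax`. -/
theorem gd_stability_implies_balancing {n : ℕ} (d : Fin n → ℝ) (hd : ∀ i, 0 ≤ d i)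
    (μmax : ℝ) (hμpos : 0 < μmax) (i₀ : Fin n) (hi₀ : d i₀ = μmax)
    (hstrict : ∀ i, i ≠ i₀ → d i < μmax)
    (h : ℝ) (hh : 0 < h) (x y : Fin n → ℝ)
    (hmin : ∀ x' y' : Fin n → ℝ,
      (∑ i, ∑ j, (Matrix.diagonal d i j - x i * y j) ^ 2) / 2 ≤
        (∑ i, ∑ j, (Matrix.diagonal d i j - x' i * y' j) ^ 2) / 2)
    (hstable : ∀ z : ℂ,
      ((gdJacobian d h x y).map (algebraMap ℝ ℂ)).charpoly.IsRoot z →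
        ‖z‖ ≤ 1) :
    (∑ i, x i ^ 2) + (∑ i, y i ^ 2) ≤ 2 / h ∧
    ∑ i, (x i - y i) ^ 2 ≤ 2 / h - 2 * μmax := by
  have hmin' : ∀ x' y', rankOneLoss d x y ≤ rankOneLoss d x' y' := fun x' y' =>
    (div_le_div_iff_of_pos_right two_pos).1 (hmin x' y')
  have hx := mul_eq_of_forall_rankOneLoss_le_right d fun y' => hmin' x y'
  have hy := mul_eq_of_forall_rankOneLoss_le_left d fun x' => hmin' x' y
  obtain ⟨a, b, hxa, hyb, hab⟩ := exists_eq_single_of_isMin hd hμpos hi₀ hstrict hmin'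
  have hsym : vecMulVec x y = vecMulVec y x := by
    rw [hxa, hyb]
    ext i j
    simp [vecMulVec_apply, Pi.single_apply, mul_comm]
  have hne : Sum.elim y x ≠ 0 := by
    intro h0
    have ha : a = 0 := by simpa [hxa] using congrFun h0 (Sum.inr i₀)
    rw [ha, zero_mul] at hab
    exact hμpos.ne hab
  have hroot := isRoot_charpoly_of_mulVec_eq_smul hne (gdJacobian_mulVec_sumElim d h hx hy hsym)
  have hmod := hstable _ (by rw [charpoly_map]; exact hroot.map)
  rw [norm_algebraMap', Real.norm_eq_abs, abs_le] at hmod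
  have hxy : ∑ i, x i * y i = μmax := by
    simp [hxa, hyb, Pi.single_apply, hab]
  have hdist : ∑ i, (x i - y i) ^ 2 = (∑ i, x i ^ 2) + (∑ i, y i ^ 2) - 2 * μmax := by
    simp only [sub_sq, Finset.sum_add_distrib, Finset.sum_sub_distrib, mul_assoc, ← Finset.mul_sum,
      hxy]
    ring
  have hbound : (∑ i, x i ^ 2) + (∑ i, y i ^ 2) ≤ 2 / h := by
    rw [le_div_iff₀ hh]
    linarith
  exact ⟨hbound, by linarith⟩
end
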